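/- Let 𝒜 be a unital ∗-algebra over ℂ and let Φ : 𝒜 → 𝒜 be a nonlinear ⋄-derivation such that Φ(I/2) and Φ(iI/2) are self-adjoint. Then Φ(−iA) = −iΦ(A) for every A ∈ 𝒜. -/

import Mathlib

/-!
Write `A ⋄ B = A* B - B* A`. Applying `Φ` to `I/2 ⋄ iI/2 = iI/2` gives `Φ(iI/2) = i Φ(I/2)`, and
two self-adjoint elements differing by the factor `i` vanish; so `Φ(I/2) = Φ(iI/2) = 0`.
Consequently `Φ` commutes with `X ⋄ ·` and `· ⋄ X` for `X = I/2, iI/2`. The identities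
`I/2 ⋄ (-iA) = iI/2 ⋄ A` and `(-iA) ⋄ iI/2 = I/2 ⋄ A` then express both
`Φ(-iA) - Φ(-iA)*` and `Φ(-iA) + Φ(-iA)*` through `Φ(A)`, and adding them gives the result.
-/

section Diamond

variable {R : Type*} [Ring R] [StarRing R]

def diamond (A B : R) : R := star A * B - star B * A

def IsDiamondDerivation (Φ : R → R) : Prop :=
  ∀ A B, Φ (diamond A B) = diamond (Φ A) B + diamond A (Φ B)

@[simp]
lemma diamond_zero_left (A : R) : diamond 0 A = 0 := by
  simp [diamond]

@[simp]
lemma diamond_zero_right (A : R) : diamond A 0 = 0 := by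
  simp [diamond]

section Scalar

variable {𝕜 : Type*} [CommSemiring 𝕜] [StarRing 𝕜] [Algebra 𝕜 R] [StarModule 𝕜 R]

lemma diamond_smul_one_left (c : 𝕜) (A : R) : diamond (c • 1) A = star c • A - c • star A := by
  simp [diamond]

lemma diamond_smul_one_right (c : 𝕜) (A : R) : diamond A (c • 1) = c • star A - star c • A := by
  simp [diamond]

end Scalar

namespace IsDiamondDerivation

variable {Φ : R → R} (hΦ : IsDiamondDerivation Φ) {X : R}
include hΦ

lemma map_diamond_left_of_map_eq_zero (hX : Φ X = 0) (A : R) :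
    Φ (diamond X A) = diamond X (Φ A) := by
  rw [hΦ, hX, diamond_zero_left, zero_add]

lemma map_diamond_right_of_map_eq_zero (hX : Φ X = 0) (A : R) :
    Φ (diamond A X) = diamond (Φ A) X := by
  rw [hΦ, hX, diamond_zero_right, add_zero]

end IsDiamondDerivation

end Diamond

lemma eq_zero_of_isSelfAdjoint_of_isSelfAdjoint_I_smul {M : Type*} [AddCommGroup M] [Module ℂ M]
    [StarAddMonoid M] [StarModule ℂ M] {P : M} (hP : IsSelfAdjoint P)
    (hIP : IsSelfAdjoint (Complex.I • P)) : P = 0 := by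
  have h : (2 * Complex.I) • P = 0 := by
    have hconj : -(Complex.I • P) = Complex.I • P := by
      simpa [star_smul, hP.star_eq] using hIP.star_eq
    rw [mul_smul, two_smul]
    nth_rewrite 1 [← hconj]
    exact neg_add_cancel _
  simpa using h

section ComplexAlgebra

open Complex

variable {𝒜 : Type*} [Ring 𝒜] [StarRing 𝒜] [Algebra ℂ 𝒜] [StarModule ℂ 𝒜]

lemma diamond_half_half_I : diamond ((1 / 2 : ℂ) • (1 : 𝒜)) ((I / 2) • 1) = (I / 2) • 1 := by
  simp only [diamond_smul_one_left, star_smul, star_one, smul_smul, star_div₀,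
    star_ofNat, RCLike.star_def, conj_I]
  match_scalars
  ring

lemma diamond_half_neg_I_smul (A : 𝒜) :
    diamond ((1 / 2 : ℂ) • 1) ((-I) • A) = diamond ((I / 2) • 1) A := by
  simp only [diamond_smul_one_left, star_smul, star_neg, smul_smul, star_div₀, star_one,
    star_ofNat, RCLike.star_def, conj_I]
  module

lemma diamond_neg_I_smul_half_I (A : 𝒜) :
    diamond ((-I) • A) ((I / 2) • 1) = diamond ((1 / 2 : ℂ) • 1) A := by
  simp only [diamond_smul_one_left, diamond_smul_one_right, star_smul, star_neg, smul_smul,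
    star_div₀, star_one, star_ofNat, RCLike.star_def, conj_I]
  match_scalars <;> ring_nf <;> simp only [I_sq] <;> ring

lemma eq_neg_I_smul_of_diamond_eq {X Y : 𝒜}
    (hsub : diamond ((1 / 2 : ℂ) • 1) X = diamond ((I / 2) • 1) Y)
    (hadd : diamond X ((I / 2) • 1) = diamond ((1 / 2 : ℂ) • 1) Y) : X = (-I) • Y := by
  simp only [diamond_smul_one_left, diamond_smul_one_right, star_div₀, star_one, star_ofNat,
    RCLike.star_def, conj_I] at hsub hadd
  linear_combination (norm := skip) hsub + (-I) • hadd
  match_scalars <;> ring_nf <;> simp only [I_sq] <;> ring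

namespace IsDiamondDerivation

variable {Φ : 𝒜 → 𝒜} (hΦ : IsDiamondDerivation Φ)
include hΦ

lemma map_half_I_eq_I_smul (hP : IsSelfAdjoint (Φ ((1 / 2 : ℂ) • 1)))
    (hQ : IsSelfAdjoint (Φ ((I / 2) • 1))) : Φ ((I / 2) • 1) = I • Φ ((1 / 2 : ℂ) • 1) := by
  conv_lhs => rw [← diamond_half_half_I, hΦ]
  simp only [diamond_smul_one_right, diamond_smul_one_left, hP.star_eq, hQ.star_eq, star_div₀,
    star_one, star_ofNat, RCLike.star_def, conj_I]
  module

lemma map_half_eq_zero (hP : IsSelfAdjoint (Φ ((1 / 2 : ℂ) • 1)))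
    (hQ : IsSelfAdjoint (Φ ((I / 2) • 1))) :
    Φ ((1 / 2 : ℂ) • 1) = 0 ∧ Φ ((I / 2) • 1) = 0 := by
  have hQP := hΦ.map_half_I_eq_I_smul hP hQ
  have hP0 := eq_zero_of_isSelfAdjoint_of_isSelfAdjoint_I_smul hP (hQP ▸ hQ)
  exact ⟨hP0, by rw [hQP, hP0, smul_zero]⟩

end IsDiamondDerivation

end ComplexAlgebra

/-- If `Φ` is a nonlinear `⋄`-derivation on a unital ∗-algebra over `ℂ`
with `Φ(I/2)` and `Φ(iI/2)` self-adjoint, then `Φ(−iA) = −iΦ(A)` for every `A`. -/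
theorem stmt3 {𝒜 : Type*} [Ring 𝒜] [Algebra ℂ 𝒜] [StarRing 𝒜] [StarModule ℂ 𝒜]
    (Φ : 𝒜 → 𝒜)
    (hΦ : ∀ A B : 𝒜, Φ (star A * B - star B * A) =
      (star (Φ A) * B - star B * Φ A) + (star A * Φ B - star (Φ B) * A))
    (h1 : star (Φ (((1 : ℂ)/2) • (1 : 𝒜))) = Φ (((1 : ℂ)/2) • (1 : 𝒜)))
    (h2 : star (Φ ((Complex.I/2) • (1 : 𝒜))) = Φ ((Complex.I/2) • (1 : 𝒜))) :
    ∀ A : 𝒜, Φ ((-Complex.I) • A) = (-Complex.I) • Φ A := by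
  intro A
  have hD : IsDiamondDerivation Φ := hΦ
  obtain ⟨hP, hQ⟩ := hD.map_half_eq_zero h1 h2
  apply eq_neg_I_smul_of_diamond_eq
  · rw [← hD.map_diamond_left_of_map_eq_zero hP, ← hD.map_diamond_left_of_map_eq_zero hQ,
      diamond_half_neg_I_smul]
  · rw [← hD.map_diamond_right_of_map_eq_zero hQ, ← hD.map_diamond_left_of_map_eq_zero hP,
      diamond_neg_I_smul_half_I]
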